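/- arXiv:2412.03478 — 2 statements merged into one kernel-verified Lean document; each statement's English description precedes it below -/
import Mathlib

section
/- If K is a bounded, continuous, integrally strictly positive definite kernel on ℝ^d, then the maximum mean discrepancy γ_K(μ₀, μ₁) := sup_{f ∈ H, ‖f‖ ≤ 1} |∫ f dμ₀ − ∫ f dμ₁| defines a metric on the set of Borel probability measures on ℝ^d. -/
/-!
Every `f` in the unit ball of `H` gives a pseudometric `|∫ f dμ₀ - ∫ f dμ₁|`, and a supremum of
pseudometrics is a pseudometric as long as it is finite, which boundedness of `K` guarantees.
If `γ(μ₀, μ₁) = 0`, then testing against `f = Φ z` shows that `K` has the same mean `∫ K z y dμ`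
under both measures for every `z`; by Fubini and symmetry of `K` the energy `∬ K d(μ₀ - μ₁)²`
then vanishes, so `μ₀ = μ₁` by integral strict positive definiteness.
-/

open MeasureTheory
open scoped RealInnerProductSpace

section KernelEnergy

variable {X : Type*} [MeasurableSpace X]

theorem kernel_energy_eq_zero_of_integral_eq {k : X → X → ℝ} (hk : ∀ x y, k x y = k y x)
    {μ ν : Measure X} [SFinite μ] [SFinite ν] (hint : Integrable (Function.uncurry k) (μ.prod ν))
    (hmean : ∀ z, ∫ y, k z y ∂μ = ∫ y, k z y ∂ν) :
    ∫ x, ∫ y, k x y ∂μ ∂μ - 2 * ∫ x, ∫ y, k x y ∂ν ∂μ + ∫ x, ∫ y, k x y ∂ν ∂ν = 0 := by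
  have hμμ : ∫ x, ∫ y, k x y ∂μ ∂μ = ∫ x, ∫ y, k x y ∂ν ∂μ :=
    integral_congr_ae (ae_of_all _ hmean)
  have hμν : ∫ x, ∫ y, k x y ∂ν ∂μ = ∫ x, ∫ y, k x y ∂ν ∂ν := by
    rw [integral_integral_swap hint]
    refine integral_congr_ae (ae_of_all _ fun y => ?_)
    simp only [hk _ y]
    exact hmean y
  rw [hμμ, hμν]
  ring

end KernelEnergy

section MMD

variable {X H : Type*} [MeasurableSpace X] [NormedAddCommGroup H] [InnerProductSpace ℝ H]

/-- `H` plays the reproducing kernel Hilbert space, in which `f x = ⟪f, Φ x⟫`. -/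
noncomputable def mmd (Φ : X → H) (μ ν : Measure X) : ℝ :=
  sSup {r : ℝ | ∃ f : H, ‖f‖ ≤ 1 ∧ r = |(∫ x, ⟪f, Φ x⟫ ∂μ) - ∫ x, ⟪f, Φ x⟫ ∂ν|}

theorem mmd_comm (Φ : X → H) (μ ν : Measure X) : mmd Φ μ ν = mmd Φ ν μ := by
  simp only [mmd, abs_sub_comm]

theorem mmd_self (Φ : X → H) (μ : Measure X) : mmd Φ μ μ = 0 := by
  have hball : ∃ f : H, ‖f‖ ≤ 1 := ⟨0, by simp⟩
  simp [mmd, hball]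

variable {Φ : X → H} {B : ℝ}

theorem abs_integral_inner_le (hΦ : ∀ x, ‖Φ x‖ ≤ B) (μ : Measure X) [IsFiniteMeasure μ]
    {f : H} (hf : ‖f‖ ≤ 1) : |∫ x, ⟪f, Φ x⟫ ∂μ| ≤ B * μ.real Set.univ := by
  have hbound : ∀ x, ‖⟪f, Φ x⟫‖ ≤ B := fun x =>
    calc ‖⟪f, Φ x⟫‖ ≤ ‖f‖ * ‖Φ x‖ := norm_inner_le_norm f (Φ x)
      _ ≤ 1 * B := mul_le_mul hf (hΦ x) (norm_nonneg _) zero_le_one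
      _ = B := one_mul B
  simpa only [Real.norm_eq_abs] using norm_integral_le_of_norm_le_const (ae_of_all μ hbound)

variable (hΦ : ∀ x, ‖Φ x‖ ≤ B) {μ₀ μ₁ μ₂ : Measure X}
  [IsFiniteMeasure μ₀] [IsFiniteMeasure μ₁] [IsFiniteMeasure μ₂]
include hΦ

theorem abs_integral_inner_sub_le_mmd {f : H} (hf : ‖f‖ ≤ 1) :
    |(∫ x, ⟪f, Φ x⟫ ∂μ₀) - ∫ x, ⟪f, Φ x⟫ ∂μ₁| ≤ mmd Φ μ₀ μ₁ := by
  refine le_csSup ⟨B * μ₀.real Set.univ + B * μ₁.real Set.univ, ?_⟩ ⟨f, hf, rfl⟩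
  rintro r ⟨g, hg, rfl⟩
  exact (abs_sub _ _).trans
    (add_le_add (abs_integral_inner_le hΦ μ₀ hg) (abs_integral_inner_le hΦ μ₁ hg))

theorem mmd_nonneg : 0 ≤ mmd Φ μ₀ μ₁ :=
  (abs_nonneg _).trans (abs_integral_inner_sub_le_mmd hΦ (f := 0) (by simp))

theorem mmd_triangle : mmd Φ μ₀ μ₂ ≤ mmd Φ μ₀ μ₁ + mmd Φ μ₁ μ₂ := by
  refine Real.sSup_le ?_ (add_nonneg (mmd_nonneg hΦ) (mmd_nonneg hΦ))
  rintro r ⟨f, hf, rfl⟩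
  calc |(∫ x, ⟪f, Φ x⟫ ∂μ₀) - ∫ x, ⟪f, Φ x⟫ ∂μ₂|
      ≤ |(∫ x, ⟪f, Φ x⟫ ∂μ₀) - ∫ x, ⟪f, Φ x⟫ ∂μ₁| +
        |(∫ x, ⟪f, Φ x⟫ ∂μ₁) - ∫ x, ⟪f, Φ x⟫ ∂μ₂| := abs_sub_le _ _ _
    _ ≤ mmd Φ μ₀ μ₁ + mmd Φ μ₁ μ₂ :=
      add_le_add (abs_integral_inner_sub_le_mmd hΦ hf) (abs_integral_inner_sub_le_mmd hΦ hf)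

theorem integral_inner_eq_of_mmd_eq_zero (h : mmd Φ μ₀ μ₁ = 0) (g : H) :
    ∫ x, ⟪g, Φ x⟫ ∂μ₀ = ∫ x, ⟪g, Φ x⟫ ∂μ₁ := by
  rcases eq_or_ne g 0 with rfl | hg
  · simp
  have hnorm : ‖‖g‖⁻¹ • g‖ ≤ 1 := by
    rw [norm_smul, norm_inv, norm_norm, inv_mul_cancel₀ (norm_ne_zero_iff.mpr hg)]
  have hle := abs_integral_inner_sub_le_mmd hΦ (μ₀ := μ₀) (μ₁ := μ₁) hnorm
  rw [h, abs_nonpos_iff, sub_eq_zero] at hle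
  simp only [real_inner_smul_left, integral_const_mul] at hle
  exact mul_left_cancel₀ (inv_ne_zero (norm_ne_zero_iff.mpr hg)) hle

end MMD

theorem stmt0_general {d : ℕ} {H : Type*} [NormedAddCommGroup H] [InnerProductSpace ℝ H]
    (K : EuclideanSpace ℝ (Fin d) → EuclideanSpace ℝ (Fin d) → ℝ)
    (Φ : EuclideanSpace ℝ (Fin d) → H)
    (hKΦ : ∀ x y, K x y = ⟪Φ x, Φ y⟫)
    (hsymm : ∀ x y, K x y = K y x)
    (hbdd : ∃ C, ∀ x y, |K x y| ≤ C)
    (hcont : Continuous fun p : EuclideanSpace ℝ (Fin d) × EuclideanSpace ℝ (Fin d) => K p.1 p.2)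
    -- integral strict positive definiteness: for every nonzero finite signed Borel measure
    -- `η = p - n` (Jordan decomposition into finite measures `p ≠ n`), `∬ K dη dη > 0`
    (hispd : ∀ p n : Measure (EuclideanSpace ℝ (Fin d)), IsFiniteMeasure p → IsFiniteMeasure n →
      p ≠ n →
      0 < ∫ x, ∫ y, K x y ∂p ∂p - 2 * ∫ x, ∫ y, K x y ∂n ∂p + ∫ x, ∫ y, K x y ∂n ∂n)
    (γ : Measure (EuclideanSpace ℝ (Fin d)) → Measure (EuclideanSpace ℝ (Fin d)) → ℝ)
    (hγ : ∀ μ₀ μ₁ : Measure (EuclideanSpace ℝ (Fin d)), γ μ₀ μ₁ =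
      sSup {r : ℝ | ∃ f : H, ‖f‖ ≤ 1 ∧
        r = |(∫ x, ⟪f, Φ x⟫ ∂μ₀) - ∫ x, ⟪f, Φ x⟫ ∂μ₁|}) :
    (∀ μ₀ μ₁ : Measure (EuclideanSpace ℝ (Fin d)), IsProbabilityMeasure μ₀ →
        IsProbabilityMeasure μ₁ → 0 ≤ γ μ₀ μ₁) ∧
    (∀ μ₀ μ₁ : Measure (EuclideanSpace ℝ (Fin d)), IsProbabilityMeasure μ₀ →
        IsProbabilityMeasure μ₁ → γ μ₀ μ₁ = γ μ₁ μ₀) ∧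
    (∀ μ₀ μ₁ : Measure (EuclideanSpace ℝ (Fin d)), IsProbabilityMeasure μ₀ →
        IsProbabilityMeasure μ₁ → (γ μ₀ μ₁ = 0 ↔ μ₀ = μ₁)) ∧
    (∀ μ₀ μ₁ μ₂ : Measure (EuclideanSpace ℝ (Fin d)), IsProbabilityMeasure μ₀ →
        IsProbabilityMeasure μ₁ → IsProbabilityMeasure μ₂ →
        γ μ₀ μ₂ ≤ γ μ₀ μ₁ + γ μ₁ μ₂) := by
  obtain rfl : γ = mmd Φ := funext₂ hγ
  obtain ⟨C, hC⟩ := hbdd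
  have hΦ : ∀ x, ‖Φ x‖ ≤ Real.sqrt C := fun x => by
    have hsq : ‖Φ x‖ ^ 2 ≤ C := by
      rw [← real_inner_self_eq_norm_sq, ← hKΦ]
      exact (le_abs_self _).trans (hC x x)
    exact (le_abs_self _).trans (Real.abs_le_sqrt hsq)
  refine ⟨fun μ₀ μ₁ _ _ => mmd_nonneg hΦ, fun μ₀ μ₁ _ _ => mmd_comm Φ μ₀ μ₁,
    fun μ₀ μ₁ _ _ => ⟨fun h => ?_, fun h => h ▸ mmd_self Φ μ₀⟩,
    fun μ₀ μ₁ μ₂ _ _ _ => mmd_triangle hΦ⟩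
  by_contra hne
  have hint : Integrable (Function.uncurry K) (μ₀.prod μ₁) :=
    (integrable_const C).mono' hcont.aestronglyMeasurable (ae_of_all _ fun p => hC p.1 p.2)
  have hmean : ∀ z, ∫ y, K z y ∂μ₀ = ∫ y, K z y ∂μ₁ := fun z => by
    simpa only [hKΦ] using integral_inner_eq_of_mmd_eq_zero hΦ h (Φ z)
  exact (hispd μ₀ μ₁ inferInstance inferInstance hne).ne'
    (kernel_energy_eq_zero_of_integral_eq hsymm hint hmean)

/-- If `K` is a bounded, continuous, integrally strictly positive definite kernel on `ℝ^d`
(presented via its RKHS `H` with feature map `Φ`, so that elements `f` of `H` act on points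
by `f(x) = ⟪f, Φ x⟫` and `K x y = ⟪Φ x, Φ y⟫`, with the features spanning a dense subspace),
then the maximum mean discrepancy
`γ_K(μ₀, μ₁) = sup_{f ∈ H, ‖f‖ ≤ 1} |∫ f dμ₀ − ∫ f dμ₁|`
defines a metric on the set of Borel probability measures on `ℝ^d`. -/
theorem stmt0 {d : ℕ} {H : Type*} [NormedAddCommGroup H] [InnerProductSpace ℝ H]
    (K : EuclideanSpace ℝ (Fin d) → EuclideanSpace ℝ (Fin d) → ℝ)
    (Φ : EuclideanSpace ℝ (Fin d) → H)
    (hKΦ : ∀ x y, K x y = ⟪Φ x, Φ y⟫)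
    (hdense : (Submodule.span ℝ (Set.range Φ)).topologicalClosure = ⊤)
    (hsymm : ∀ x y, K x y = K y x)
    (hbdd : ∃ C, ∀ x y, |K x y| ≤ C)
    (hcont : Continuous fun p : EuclideanSpace ℝ (Fin d) × EuclideanSpace ℝ (Fin d) => K p.1 p.2)
    -- integral strict positive definiteness: for every nonzero finite signed Borel measure
    -- `η = p - n` (Jordan decomposition into finite measures `p ≠ n`), `∬ K dη dη > 0`
    (hispd : ∀ p n : Measure (EuclideanSpace ℝ (Fin d)), IsFiniteMeasure p → IsFiniteMeasure n →
      p ≠ n →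
      0 < ∫ x, ∫ y, K x y ∂p ∂p - 2 * ∫ x, ∫ y, K x y ∂n ∂p + ∫ x, ∫ y, K x y ∂n ∂n)
    (γ : Measure (EuclideanSpace ℝ (Fin d)) → Measure (EuclideanSpace ℝ (Fin d)) → ℝ)
    (hγ : ∀ μ₀ μ₁ : Measure (EuclideanSpace ℝ (Fin d)), γ μ₀ μ₁ =
      sSup {r : ℝ | ∃ f : H, ‖f‖ ≤ 1 ∧
        r = |(∫ x, ⟪f, Φ x⟫ ∂μ₀) - ∫ x, ⟪f, Φ x⟫ ∂μ₁|}) :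
    (∀ μ₀ μ₁ : Measure (EuclideanSpace ℝ (Fin d)), IsProbabilityMeasure μ₀ →
        IsProbabilityMeasure μ₁ → 0 ≤ γ μ₀ μ₁) ∧
    (∀ μ₀ μ₁ : Measure (EuclideanSpace ℝ (Fin d)), IsProbabilityMeasure μ₀ →
        IsProbabilityMeasure μ₁ → γ μ₀ μ₁ = γ μ₁ μ₀) ∧
    (∀ μ₀ μ₁ : Measure (EuclideanSpace ℝ (Fin d)), IsProbabilityMeasure μ₀ →
        IsProbabilityMeasure μ₁ → (γ μ₀ μ₁ = 0 ↔ μ₀ = μ₁)) ∧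
    (∀ μ₀ μ₁ μ₂ : Measure (EuclideanSpace ℝ (Fin d)), IsProbabilityMeasure μ₀ →
        IsProbabilityMeasure μ₁ → IsProbabilityMeasure μ₂ →
        γ μ₀ μ₂ ≤ γ μ₀ μ₁ + γ μ₁ μ₂) :=
  stmt0_general K Φ hKΦ hsymm hbdd hcont hispd γ hγ
end

section
/- Let εₙ → 0 and λₙ → ∞ be positive sequences, and let Tₙ satisfy M_{λₙ}(Tₙ) − εₙ ≤ inf_T M_{λₙ}(T), where M_λ(T) = M(T) + λ γ²(μ∘T⁻¹, ν). Suppose there exists T* with μ∘(T*)⁻¹ = ν and M(T*) < ∞. Then λₙ γ²(μ∘Tₙ⁻¹, ν) → 0 as n → ∞; in particular √λₙ γ(μ∘Tₙ⁻¹, ν) → 0. -/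
open MeasureTheory Filter Topology
open scoped ENNReal

/-- `γ` is a metric on the set of Borel probability measures on `ℝ^d`. -/
def IsProbMetric {d : ℕ}
    (γ : Measure (EuclideanSpace ℝ (Fin d)) → Measure (EuclideanSpace ℝ (Fin d)) → ℝ) : Prop :=
  (∀ μ ν, IsProbabilityMeasure μ → IsProbabilityMeasure ν → 0 ≤ γ μ ν) ∧
  (∀ μ ν, IsProbabilityMeasure μ → IsProbabilityMeasure ν → γ μ ν = γ ν μ) ∧
  (∀ μ ν, IsProbabilityMeasure μ → IsProbabilityMeasure ν → (γ μ ν = 0 ↔ μ = ν)) ∧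
  (∀ μ ν ρ, IsProbabilityMeasure μ → IsProbabilityMeasure ν → IsProbabilityMeasure ρ →
    γ μ ρ ≤ γ μ ν + γ ν ρ)

/-! Evaluating `M_λ` at the exact transport map `T*` shows that the optimal value `V(λ) = inf M_λ`
never exceeds `M(T*) < ∞`; it is monotone in `λ`, so it increases to a finite limit `L`.
Comparing `M_λ(Tₙ)` with `M_{λ/2}(Tₙ) ≥ V(λ/2)` gives `(λₙ/2) γ² ≤ L + εₙ - V(λₙ/2) → 0`. -/

section PenalizedCost

variable {X : Type*} (M : X → ℝ≥0∞) (P : X → ℝ)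

noncomputable def penalizedCost (lam : ℝ) (x : X) : ℝ≥0∞ :=
  M x + ENNReal.ofReal (lam * P x)

lemma monotone_iInf_penalizedCost (hP : ∀ x, 0 ≤ P x) :
    Monotone fun lam => ⨅ x, penalizedCost M P lam x :=
  fun _ _ hle => iInf_mono fun x => by
    unfold penalizedCost
    gcongr
    exact hP x

lemma iInf_penalizedCost_le {x₀ : X} (hx₀ : P x₀ = 0) (lam : ℝ) :
    ⨅ x, penalizedCost M P lam x ≤ M x₀ :=
  (iInf_le _ x₀).trans_eq (by simp [penalizedCost, hx₀])

lemma iInf_penalizedCost_half_add_le {lam ε : ℝ} (hlam : 0 ≤ lam) {x : X} (hPx : 0 ≤ P x)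
    (hx : penalizedCost M P lam x - ENNReal.ofReal ε ≤ ⨅ y, penalizedCost M P lam y) :
    (⨅ y, penalizedCost M P (lam / 2) y) + ENNReal.ofReal (lam / 2 * P x) ≤
      (⨅ y, penalizedCost M P lam y) + ENNReal.ofReal ε :=
  calc (⨅ y, penalizedCost M P (lam / 2) y) + ENNReal.ofReal (lam / 2 * P x)
      ≤ penalizedCost M P (lam / 2) x + ENNReal.ofReal (lam / 2 * P x) := by
        gcongr
        exact iInf_le _ x
    _ = penalizedCost M P lam x := by
        rw [penalizedCost, penalizedCost, add_assoc,
          ← ENNReal.ofReal_add (by positivity) (by positivity)]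
        ring_nf
    _ ≤ (⨅ y, penalizedCost M P lam y) + ENNReal.ofReal ε := tsub_le_iff_right.mp hx

theorem tendsto_mul_penalty_of_almostMinimizer (hP : ∀ x, 0 ≤ P x) {x₀ : X} (hx₀ : P x₀ = 0)
    (hM : M x₀ ≠ ∞) {ε lam : ℕ → ℝ} (hε : Tendsto ε atTop (𝓝 0))
    (hlam : Tendsto lam atTop atTop) {x : ℕ → X}
    (hx : ∀ n, penalizedCost M P (lam n) (x n) - ENNReal.ofReal (ε n) ≤
      ⨅ y, penalizedCost M P (lam n) y) :
    Tendsto (fun n => lam n * P (x n)) atTop (𝓝 0) := by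
  set V := fun l => ⨅ y, penalizedCost M P l y
  set L := ⨆ l, V l
  have hL : L ≠ ∞ := ne_top_of_le_ne_top hM (iSup_le (iInf_penalizedCost_le M P hx₀))
  have hVL : Tendsto (fun n => V (lam n / 2)) atTop (𝓝 L) :=
    (tendsto_atTop_iSup (monotone_iInf_penalizedCost M P hP)).comp
      (hlam.atTop_div_const two_pos)
  have hgap : Tendsto (fun n => L + ENNReal.ofReal (ε n) - V (lam n / 2)) atTop (𝓝 0) := by
    simpa using ENNReal.Tendsto.sub
      ((tendsto_const_nhds (x := L)).add (ENNReal.tendsto_ofReal hε)) hVL (Or.inr hL)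
  have hlam_nonneg : ∀ᶠ n in atTop, 0 ≤ lam n := hlam.eventually_ge_atTop 0
  have hhalf : Tendsto (fun n => ENNReal.ofReal (lam n / 2 * P (x n))) atTop (𝓝 0) := by
    refine tendsto_of_tendsto_of_tendsto_of_le_of_le' tendsto_const_nhds hgap
      (Eventually.of_forall fun _ => bot_le) ?_
    filter_upwards [hlam_nonneg] with n hn
    refine ENNReal.le_sub_of_add_le_left
      (ne_top_of_le_ne_top hM (iInf_penalizedCost_le M P hx₀ _)) ?_
    calc V (lam n / 2) + ENNReal.ofReal (lam n / 2 * P (x n))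
        ≤ V (lam n) + ENNReal.ofReal (ε n) := iInf_penalizedCost_half_add_le M P hn (hP _) (hx n)
      _ ≤ L + ENNReal.ofReal (ε n) := by gcongr; exact le_iSup V _
  have hreal := ((ENNReal.tendsto_toReal ENNReal.zero_ne_top).comp hhalf).const_mul 2
  simp only [ENNReal.toReal_zero, mul_zero] at hreal
  refine hreal.congr' ?_
  filter_upwards [hlam_nonneg] with n hn
  rw [Function.comp_apply, ENNReal.toReal_ofReal (by have := hP (x n); positivity)]
  ring

end PenalizedCost

theorem tendsto_sqrt_mul_of_tendsto_mul_sq {ι : Type*} {l : Filter ι} {a b : ι → ℝ}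
    (h : Tendsto (fun i => a i * b i ^ 2) l (𝓝 0)) :
    Tendsto (fun i => Real.sqrt (a i) * b i) l (𝓝 0) := by
  rw [tendsto_zero_iff_norm_tendsto_zero]
  convert (Real.continuous_sqrt.tendsto 0).comp h using 2 with i
  · rw [Function.comp_apply, Real.sqrt_mul' _ (sq_nonneg _), Real.sqrt_sq_eq_abs,
      Real.norm_eq_abs, abs_mul, abs_of_nonneg (Real.sqrt_nonneg _)]
  · simp

theorem stmt5_general {d : ℕ} (μ ν : Measure (EuclideanSpace ℝ (Fin d)))
    [IsProbabilityMeasure ν]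
    (γ : Measure (EuclideanSpace ℝ (Fin d)) → Measure (EuclideanSpace ℝ (Fin d)) → ℝ)
    (hγ : IsProbMetric γ)
    (Mc : (EuclideanSpace ℝ (Fin d) → EuclideanSpace ℝ (Fin d)) → ℝ≥0∞)
    (Mlam : ℝ → (EuclideanSpace ℝ (Fin d) → EuclideanSpace ℝ (Fin d)) → ℝ≥0∞)
    (hMlam : ∀ lam T, Mlam lam T = Mc T + ENNReal.ofReal (lam * (γ (μ.map T) ν) ^ 2))
    (ε lam : ℕ → ℝ) (hε : Tendsto ε atTop (𝓝 0)) (hlam : Tendsto lam atTop atTop)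
    (T : ℕ → EuclideanSpace ℝ (Fin d) → EuclideanSpace ℝ (Fin d))
    (hTmeas : ∀ n, Measurable (T n))
    (hTmin : ∀ n, Mlam (lam n) (T n) - ENNReal.ofReal (ε n) ≤
      ⨅ S : {S : EuclideanSpace ℝ (Fin d) → EuclideanSpace ℝ (Fin d) // Measurable S},
        Mlam (lam n) S.1)
    (Tstar : EuclideanSpace ℝ (Fin d) → EuclideanSpace ℝ (Fin d))
    (hTstar : Measurable Tstar) (hpush : μ.map Tstar = ν) (hfin : Mc Tstar < ⊤) :
    Tendsto (fun n => lam n * (γ (μ.map (T n)) ν) ^ 2) atTop (𝓝 0) ∧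
      Tendsto (fun n => Real.sqrt (lam n) * γ (μ.map (T n)) ν) atTop (𝓝 0) := by
  have hpenalty : ∀ lam S, Mlam lam S = penalizedCost Mc (fun S => γ (μ.map S) ν ^ 2) lam S :=
    hMlam
  simp only [hpenalty] at hTmin
  have hTstar_penalty : γ (μ.map Tstar) ν ^ 2 = 0 := by
    rw [hpush, (hγ.2.2.1 ν ν inferInstance inferInstance).mpr rfl, sq, mul_zero]
  have hmain := tendsto_mul_penalty_of_almostMinimizer (x₀ := ⟨Tstar, hTstar⟩)
    (fun S : {S // Measurable S} => Mc S.1) (fun S => γ (μ.map S.1) ν ^ 2)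
    (fun _ => sq_nonneg _) hTstar_penalty hfin.ne hε hlam (x := fun n => ⟨T n, hTmeas n⟩) hTmin
  exact ⟨hmain, tendsto_sqrt_mul_of_tendsto_mul_sq hmain⟩

/-- Let `εₙ → 0` and `λₙ → ∞` be positive sequences, and let `Tₙ` satisfy
`M_{λₙ}(Tₙ) − εₙ ≤ inf_T M_{λₙ}(T)` where `M_λ(T) = M(T) + λ γ²(μ∘T⁻¹, ν)`.
Suppose there exists `T*` with `μ∘(T*)⁻¹ = ν` and `M(T*) < ∞`. Then
`λₙ γ²(μ∘Tₙ⁻¹, ν) → 0`; in particular `√λₙ γ(μ∘Tₙ⁻¹, ν) → 0`. -/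
theorem stmt5 {d : ℕ} (μ ν : Measure (EuclideanSpace ℝ (Fin d)))
    [IsProbabilityMeasure μ] [IsProbabilityMeasure ν]
    (c : EuclideanSpace ℝ (Fin d) → EuclideanSpace ℝ (Fin d) → ℝ≥0∞)
    (hc : Measurable (Function.uncurry c))
    (γ : Measure (EuclideanSpace ℝ (Fin d)) → Measure (EuclideanSpace ℝ (Fin d)) → ℝ)
    (hγ : IsProbMetric γ)
    (Mc : (EuclideanSpace ℝ (Fin d) → EuclideanSpace ℝ (Fin d)) → ℝ≥0∞)
    (hMc : ∀ T, Mc T = ∫⁻ x, c x (T x) ∂μ)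
    (Mlam : ℝ → (EuclideanSpace ℝ (Fin d) → EuclideanSpace ℝ (Fin d)) → ℝ≥0∞)
    (hMlam : ∀ lam T, Mlam lam T = Mc T + ENNReal.ofReal (lam * (γ (μ.map T) ν) ^ 2))
    (ε lam : ℕ → ℝ) (hεpos : ∀ n, 0 < ε n) (hlampos : ∀ n, 0 < lam n)
    (hε : Tendsto ε atTop (𝓝 0)) (hlam : Tendsto lam atTop atTop)
    (T : ℕ → EuclideanSpace ℝ (Fin d) → EuclideanSpace ℝ (Fin d))
    (hTmeas : ∀ n, Measurable (T n))
    (hTmin : ∀ n, Mlam (lam n) (T n) - ENNReal.ofReal (ε n) ≤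
      ⨅ S : {S : EuclideanSpace ℝ (Fin d) → EuclideanSpace ℝ (Fin d) // Measurable S},
        Mlam (lam n) S.1)
    (Tstar : EuclideanSpace ℝ (Fin d) → EuclideanSpace ℝ (Fin d))
    (hTstar : Measurable Tstar) (hpush : μ.map Tstar = ν) (hfin : Mc Tstar < ⊤) :
    Tendsto (fun n => lam n * (γ (μ.map (T n)) ν) ^ 2) atTop (𝓝 0) ∧
      Tendsto (fun n => Real.sqrt (lam n) * γ (μ.map (T n)) ν) atTop (𝓝 0) :=
  stmt5_general μ ν γ hγ Mc Mlam hMlam ε lam hε hlam T hTmeas hTmin Tstar hTstar hpush hfin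
end
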